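/- Let n ≥ 1 and S = {1, …, n+1}, let e_1, …, e_n be the standard basis of ℝ^n, set e_{n+1} = −e_1 − ⋯ − e_n, and for nonempty I ⊆ S set e_I = Σ_{i ∈ I} e_i. Let P ⊂ ℝ^n be the convex hull of {e_I : ∅ ≠ I ⊊ S}. Then every e_I with ∅ ≠ I ⊊ S is a vertex (extreme point) of P; in particular P has exactly 2^{n+1} − 2 vertices. -/

import Mathlib

/-- For `S = {1, …, n+1}`: `eVec n i` is the `i`-th standard basis vector of `ℝ^n`
for `1 ≤ i ≤ n`, and `eVec n (n+1) = -e_1 - ⋯ - e_n`. -/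
def eVec (n : ℕ) (i : ℕ) : Fin n → ℝ :=
  fun j => if i = (j : ℕ) + 1 then 1 else if i = n + 1 then -1 else 0

/-- `eSet n I = ∑ i ∈ I, e_i`. -/
def eSet (n : ℕ) (I : Finset ℕ) : Fin n → ℝ := ∑ i ∈ I, eVec n i

/-!
Linear functionals on `ℝⁿ` correspond to weightings `c` of `S = {1, …, n+1}` with total weight
zero: `v ↦ ∑ⱼ c (j+1) vⱼ` sends `e_i` to `c i`, also for `i = n+1` because the weights sum to zero,
hence it sends `e_J` to `∑_{i ∈ J} c i`. For `∅ ≠ I ⊊ S` the weighting `|S \ I|` on `I` and `-|I|`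
off `I` has total weight zero, and among the subsets `J ⊆ S` its sum is strictly largest at
`J = I`. So each `e_I` is strictly separated from all other candidates, which makes it an extreme
point of their convex hull and shows that `I ↦ e_I` is injective; the count is then the number
`2^(n+1) - 2` of nonempty proper subsets of `S`.
-/

section

variable {𝕜 E : Type*} [Field 𝕜] [LinearOrder 𝕜] [IsStrictOrderedRing 𝕜] [AddCommGroup E]
  [Module 𝕜 E]

theorem convex_insert_setOf_apply_lt (f : E →ₗ[𝕜] 𝕜) (x : E) :
    Convex 𝕜 (insert x {y | f y < f x}) := by
  rw [convex_iff_openSegment_subset]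
  rintro u hu v hv z ⟨a, b, ha, hb, hab, rfl⟩
  obtain rfl : a = 1 - b := eq_sub_of_add_eq hab
  simp only [Set.mem_insert_iff, Set.mem_ofPred_eq, map_add, map_smul, smul_eq_mul] at hu hv ⊢
  rcases hu with rfl | hu <;> rcases hv with rfl | hv
  · exact Or.inl (Convex.combo_self hab _)
  · exact Or.inr (by nlinarith [mul_lt_mul_of_pos_left hv hb])
  · exact Or.inr (by nlinarith [mul_lt_mul_of_pos_left hu ha])
  · exact Or.inr (by nlinarith [mul_lt_mul_of_pos_left hu ha, mul_lt_mul_of_pos_left hv hb])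

theorem mem_extremePoints_convexHull_of_apply_lt {s : Set E} {x : E} (hx : x ∈ s)
    (f : E →ₗ[𝕜] 𝕜) (hf : ∀ y ∈ s, y ≠ x → f y < f x) :
    x ∈ (convexHull 𝕜 s).extremePoints 𝕜 := by
  have hsub : convexHull 𝕜 s ⊆ insert x {y | f y < f x} :=
    convexHull_min (fun y hy => (eq_or_ne y x).imp id (hf y hy))
      (convex_insert_setOf_apply_lt f x)
  refine mem_extremePoints.2 ⟨subset_convexHull 𝕜 s hx, fun x₁ h₁ x₂ h₂ hseg => ?_⟩
  obtain ⟨a, b, ha, hb, hab, hx'⟩ := hseg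
  obtain rfl : a = 1 - b := eq_sub_of_add_eq hab
  have hfx : (1 - b) * f x₁ + b * f x₂ = f x := by rw [← hx', map_add, map_smul, map_smul]; rfl
  rcases hsub h₁ with rfl | (h₁ : f x₁ < f x) <;> rcases hsub h₂ with rfl | (h₂ : f x₂ < f _)
  · exact ⟨rfl, rfl⟩
  · nlinarith [mul_lt_mul_of_pos_left h₂ hb]
  · nlinarith [mul_lt_mul_of_pos_left h₁ ha]
  · nlinarith [mul_lt_mul_of_pos_left h₁ ha, mul_lt_mul_of_pos_left h₂ hb]

theorem extremePoints_convexHull_eq_of_forall_exists_apply_lt {s : Set E}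
    (hs : ∀ x ∈ s, ∃ f : E →ₗ[𝕜] 𝕜, ∀ y ∈ s, y ≠ x → f y < f x) :
    (convexHull 𝕜 s).extremePoints 𝕜 = s :=
  extremePoints_convexHull_subset.antisymm fun x hx =>
    let ⟨f, hf⟩ := hs x hx
    mem_extremePoints_convexHull_of_apply_lt hx f hf

end

open Finset

theorem Finset.sum_lt_sum_of_sdiff {ι M : Type*} [DecidableEq ι] [AddCommGroup M] [LinearOrder M]
    [IsOrderedAddMonoid M] {I J : Finset ι} {c : ι → M}
    (hpos : ∀ i ∈ I \ J, 0 < c i) (hneg : ∀ i ∈ J \ I, c i < 0) (hne : J ≠ I) :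
    ∑ i ∈ J, c i < ∑ i ∈ I, c i := by
  rw [← sub_pos, ← sum_sdiff_sub_sum_sdiff]
  have h1 : 0 ≤ ∑ i ∈ I \ J, c i := sum_nonneg fun i hi => (hpos i hi).le
  have h2 : ∑ i ∈ J \ I, c i ≤ 0 := sum_nonpos fun i hi => (hneg i hi).le
  rcases (I \ J).eq_empty_or_nonempty with h | h
  · have : (J \ I).Nonempty := by
      rw [sdiff_eq_empty_iff_subset] at h
      exact sdiff_nonempty.2 fun h' => hne (h'.antisymm h)
    exact sub_pos.2 ((sum_neg hneg this).trans_le h1)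
  · exact sub_pos.2 (h2.trans_lt (sum_pos hpos h))

theorem Finset.ncard_setOf_nonempty_ssubset {α : Type*} [DecidableEq α] {S : Finset α}
    (hS : S.Nonempty) : {J : Finset α | J.Nonempty ∧ J ⊂ S}.ncard = 2 ^ S.card - 2 := by
  have : {J : Finset α | J.Nonempty ∧ J ⊂ S} = ↑(S.ssubsets.erase ∅) := by
    ext J
    simp [nonempty_iff_ne_empty, and_comm]
  rw [this, Set.ncard_coe_finset, card_erase_of_mem (empty_mem_ssubsets hS),
    ssubsets, card_erase_of_mem (mem_powerset_self S), card_powerset]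
  omega

def weightFunctional (n : ℕ) (c : ℕ → ℝ) : (Fin n → ℝ) →ₗ[ℝ] ℝ :=
  ∑ j : Fin n, c (j + 1) • LinearMap.proj j

theorem weightFunctional_apply (n : ℕ) (c : ℕ → ℝ) (v : Fin n → ℝ) :
    weightFunctional n c v = ∑ j : Fin n, c (j + 1) * v j := by
  simp [weightFunctional]

theorem Finset.sum_Icc_one_add_one {M : Type*} [AddCommMonoid M] (n : ℕ) (c : ℕ → M) :
    ∑ i ∈ Icc 1 (n + 1), c i = ∑ j : Fin n, c (j + 1) + c (n + 1) := by
  rw [sum_Icc_succ_top (by omega), ← Ico_succ_right_eq_Icc, sum_Ico_eq_sum_range,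
    Fin.sum_univ_eq_sum_range (fun j => c (j + 1))]
  simp [add_comm]

theorem weightFunctional_eVec {n : ℕ} {c : ℕ → ℝ} (hc : ∑ i ∈ Icc 1 (n + 1), c i = 0) {i : ℕ}
    (hi : i ∈ Icc 1 (n + 1)) : weightFunctional n c (eVec n i) = c i := by
  rw [weightFunctional_apply]
  obtain ⟨hi1, hin⟩ := mem_Icc.1 hi
  rcases hin.eq_or_lt with rfl | hin
  · have heVec : ∀ j : Fin n, eVec n (n + 1) j = -1 := fun j => by simp [eVec, j.isLt.ne']
    simp only [heVec, mul_neg_one, sum_neg_distrib]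
    linarith [sum_Icc_one_add_one n c]
  · rw [sum_eq_single ⟨i - 1, by omega⟩]
    · simp [eVec, Nat.sub_add_cancel hi1]
    · intro j _ hj
      have : i ≠ j + 1 := fun h => hj (Fin.ext (by simp [h]))
      simp [eVec, this, hin.ne]
    · simp

theorem weightFunctional_eSet {n : ℕ} {c : ℕ → ℝ} (hc : ∑ i ∈ Icc 1 (n + 1), c i = 0)
    {J : Finset ℕ} (hJ : J ⊆ Icc 1 (n + 1)) : weightFunctional n c (eSet n J) = ∑ i ∈ J, c i := by
  rw [eSet, map_sum]
  exact sum_congr rfl fun i hi => weightFunctional_eVec hc (hJ hi)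

def vertexWeight {α : Type*} [DecidableEq α] (S I : Finset α) (i : α) : ℝ :=
  if i ∈ I then (#(S \ I) : ℝ) else -(#I : ℝ)

theorem sum_vertexWeight {α : Type*} [DecidableEq α] {S I : Finset α} (hI : I ⊆ S) :
    ∑ i ∈ S, vertexWeight S I i = 0 := by
  simp only [vertexWeight]
  rw [sum_ite, filter_mem_eq_inter, inter_eq_right.2 hI, filter_notMem_eq_sdiff]
  simp only [sum_const, nsmul_eq_mul]
  ring

theorem sum_vertexWeight_lt {α : Type*} [DecidableEq α] {S I J : Finset α} (hI : I.Nonempty)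
    (hIS : I ⊂ S) (hJI : J ≠ I) :
    ∑ i ∈ J, vertexWeight S I i < ∑ i ∈ I, vertexWeight S I i := by
  refine sum_lt_sum_of_sdiff (fun i hi => ?_) (fun i hi => ?_) hJI
  · rw [vertexWeight, if_pos (mem_sdiff.1 hi).1]
    exact_mod_cast card_pos.2 (sdiff_nonempty.2 hIS.not_subset)
  · rw [vertexWeight, if_neg (mem_sdiff.1 hi).2, neg_lt_zero]
    exact_mod_cast hI.card_pos

theorem weightFunctional_vertexWeight_eSet_lt {n : ℕ} {I J : Finset ℕ} (hI : I.Nonempty)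
    (hIS : I ⊂ Icc 1 (n + 1)) (hJS : J ⊆ Icc 1 (n + 1)) (hJI : J ≠ I) :
    weightFunctional n (vertexWeight (Icc 1 (n + 1)) I) (eSet n J) <
      weightFunctional n (vertexWeight (Icc 1 (n + 1)) I) (eSet n I) := by
  have hc := sum_vertexWeight hIS.subset
  rw [weightFunctional_eSet hc hJS, weightFunctional_eSet hc hIS.subset]
  exact sum_vertexWeight_lt hI hIS hJI

theorem eSet_injOn (n : ℕ) : Set.InjOn (eSet n) {J | J.Nonempty ∧ J ⊂ Icc 1 (n + 1)} := by
  rintro I ⟨hI, hIS⟩ J ⟨-, hJS⟩ hIJ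
  by_contra hne
  exact (weightFunctional_vertexWeight_eSet_lt hI hIS hJS.subset (Ne.symm hne)).ne (by rw [hIJ])

theorem stmt_11_general (n : ℕ) :
    (∀ I : Finset ℕ, I.Nonempty → I ⊂ Finset.Icc 1 (n + 1) →
      eSet n I ∈ Set.extremePoints ℝ (convexHull ℝ
        {v : Fin n → ℝ | ∃ J : Finset ℕ, J.Nonempty ∧ J ⊂ Finset.Icc 1 (n + 1) ∧
          v = eSet n J})) ∧
    (Set.extremePoints ℝ (convexHull ℝ
        {v : Fin n → ℝ | ∃ J : Finset ℕ, J.Nonempty ∧ J ⊂ Finset.Icc 1 (n + 1) ∧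
          v = eSet n J})).ncard = 2 ^ (n + 1) - 2 := by
  set V := {v : Fin n → ℝ | ∃ J : Finset ℕ, J.Nonempty ∧ J ⊂ Icc 1 (n + 1) ∧ v = eSet n J}
  have hext : (convexHull ℝ V).extremePoints ℝ = V := by
    refine extremePoints_convexHull_eq_of_forall_exists_apply_lt ?_
    rintro _ ⟨I, hI, hIS, rfl⟩
    refine ⟨weightFunctional n (vertexWeight (Icc 1 (n + 1)) I), ?_⟩
    rintro _ ⟨J, -, hJS, rfl⟩ hne
    exact weightFunctional_vertexWeight_eSet_lt hI hIS hJS.subset (fun h => hne (h ▸ rfl))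
  have hV : V = eSet n '' {J | J.Nonempty ∧ J ⊂ Icc 1 (n + 1)} := by
    ext v
    simp [V, eq_comm, and_assoc]
  rw [hext]
  refine ⟨fun I hI hIS => ⟨I, hI, hIS, rfl⟩, ?_⟩
  rw [hV, (eSet_injOn n).ncard_image,
    ncard_setOf_nonempty_ssubset (nonempty_Icc.2 (by omega)), Nat.card_Icc]
  rfl

/-- Every `e_I`, for `I` a nonempty proper subset of `S = {1, …, n+1}`, is a vertex
(extreme point) of the polytope `P = conv{e_I : ∅ ≠ I ⊊ S}`; in particular `P` has
exactly `2^(n+1) - 2` vertices. -/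
theorem stmt_11 (n : ℕ) (hn : 1 ≤ n) :
    (∀ I : Finset ℕ, I.Nonempty → I ⊂ Finset.Icc 1 (n + 1) →
      eSet n I ∈ Set.extremePoints ℝ (convexHull ℝ
        {v : Fin n → ℝ | ∃ J : Finset ℕ, J.Nonempty ∧ J ⊂ Finset.Icc 1 (n + 1) ∧
          v = eSet n J})) ∧
    (Set.extremePoints ℝ (convexHull ℝ
        {v : Fin n → ℝ | ∃ J : Finset ℕ, J.Nonempty ∧ J ⊂ Finset.Icc 1 (n + 1) ∧
          v = eSet n J})).ncard = 2 ^ (n + 1) - 2 :=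
  stmt_11_general n
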